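/- arXiv:1803.06087 — 4 statements merged into one kernel-verified Lean document; each statement's English description precedes it below -/
import Mathlib

section
/- For every (x,y) ∈ ℝ² with (x,y) ≠ (0,0), the inner product of the gradient of W at (x,y) with f(x,y) equals −(a(x,y)² + b(x,y)²)/(x²+y²). -/
/-!
Away from the origin `∇W = (a, b) / (x² + y²)²`. Hence `f₀ = (-b, a)` is orthogonal to `∇W`,
and `f₁ = -(x² + y²)(a, b)` contributes `-(a² + b²) / (x² + y²)`.
-/

/-- `W(x,y) = (x⁴+y⁴)/(x²+y²)` for `(x,y) ≠ (0,0)`, and `W(0,0) = 0`. -/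
noncomputable def W (p : ℝ × ℝ) : ℝ :=
  if p = 0 then 0 else (p.1 ^ 4 + p.2 ^ 4) / (p.1 ^ 2 + p.2 ^ 2)

def a (x y : ℝ) : ℝ := 2 * x * (x ^ 4 + 2 * x ^ 2 * y ^ 2 - y ^ 4)

def b (x y : ℝ) : ℝ := 2 * y * (-x ^ 4 + 2 * x ^ 2 * y ^ 2 + y ^ 4)

def f0 (p : ℝ × ℝ) : ℝ × ℝ := (-b p.1 p.2, a p.1 p.2)

def f1 (p : ℝ × ℝ) : ℝ × ℝ :=
  (-(p.1 ^ 2 + p.2 ^ 2) * a p.1 p.2, -(p.1 ^ 2 + p.2 ^ 2) * b p.1 p.2)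

def f (p : ℝ × ℝ) : ℝ × ℝ := f0 p + f1 p

open ContinuousLinearMap

lemma fst_sq_add_snd_sq_ne_zero {p : ℝ × ℝ} (hp : p ≠ 0) : p.1 ^ 2 + p.2 ^ 2 ≠ 0 := by
  contrapose! hp
  ext <;> simp only [Prod.fst_zero, Prod.snd_zero] <;> nlinarith [sq_nonneg p.1, sq_nonneg p.2]

lemma W_eventuallyEq {p : ℝ × ℝ} (hp : p ≠ 0) :
    W =ᶠ[nhds p] fun q => (q.1 ^ 4 + q.2 ^ 4) * (q.1 ^ 2 + q.2 ^ 2)⁻¹ := by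
  filter_upwards [isOpen_compl_singleton.mem_nhds hp] with q hq
  rw [W, div_eq_mul_inv]
  exact if_neg hq

lemma hasFDerivAt_W {p : ℝ × ℝ} (hp : p ≠ 0) :
    HasFDerivAt W (((p.1 ^ 2 + p.2 ^ 2) ^ 2)⁻¹ •
      (a p.1 p.2 • fst ℝ ℝ ℝ + b p.1 p.2 • snd ℝ ℝ ℝ)) p := by
  have hr := fst_sq_add_snd_sq_ne_zero hp
  have hx := hasFDerivAt_fst (𝕜 := ℝ) (p := p)
  have hy := hasFDerivAt_snd (𝕜 := ℝ) (p := p)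
  have hnum := ((hasDerivAt_pow 4 p.1).comp_hasFDerivAt p hx).add
    ((hasDerivAt_pow 4 p.2).comp_hasFDerivAt p hy)
  have hden := ((hasDerivAt_pow 2 p.1).comp_hasFDerivAt p hx).add
    ((hasDerivAt_pow 2 p.2).comp_hasFDerivAt p hy)
  have hquot := hnum.mul ((hasDerivAt_inv hr).comp_hasFDerivAt p hden)
  refine (hquot.congr_of_eventuallyEq (W_eventuallyEq hp)).congr_fderiv ?_
  ext <;>
    simp only [Pi.add_apply, Function.comp_apply, Nat.cast_ofNat, Nat.add_one_sub_one, pow_one,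
      smul_add, neg_smul, smul_neg, add_comp, neg_comp, smul_comp, fst_comp_inl, snd_comp_inl,
      fst_comp_inr, snd_comp_inr, smul_zero, neg_zero, add_zero, zero_add, add_apply, neg_apply,
      smul_apply, id_apply, smul_eq_mul, mul_one, a, b] <;>
    field_simp <;> ring

lemma fderiv_W_apply {p : ℝ × ℝ} (hp : p ≠ 0) (v : ℝ × ℝ) :
    fderiv ℝ W p v = (a p.1 p.2 * v.1 + b p.1 p.2 * v.2) / (p.1 ^ 2 + p.2 ^ 2) ^ 2 := by
  rw [(hasFDerivAt_W hp).fderiv]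
  simp only [smul_apply, add_apply, coe_fst', coe_snd', smul_eq_mul]
  ring

lemma fderiv_W_f0 {p : ℝ × ℝ} (hp : p ≠ 0) : fderiv ℝ W p (f0 p) = 0 := by
  rw [fderiv_W_apply hp, f0]
  ring

lemma fderiv_W_f1 {p : ℝ × ℝ} (hp : p ≠ 0) :
    fderiv ℝ W p (f1 p) = -(a p.1 p.2 ^ 2 + b p.1 p.2 ^ 2) / (p.1 ^ 2 + p.2 ^ 2) := by
  have hr := fst_sq_add_snd_sq_ne_zero hp
  rw [fderiv_W_apply hp, f1]
  field_simp
  ring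

/-- For `(x,y) ≠ (0,0)`, `⟨∇W(x,y), f(x,y)⟩ = -(a² + b²)/(x² + y²)`. -/
theorem stmt5 :
    ∀ p : ℝ × ℝ, p ≠ 0 →
      fderiv ℝ W p (f p) = -(a p.1 p.2 ^ 2 + b p.1 p.2 ^ 2) / (p.1 ^ 2 + p.2 ^ 2) := by
  intro p hp
  rw [f, map_add, fderiv_W_f0 hp, fderiv_W_f1 hp, zero_add]
end

section
/- Let q: ℝ² → ℝ be a nonzero polynomial function, write q = Σ_j q_j where each q_j is the homogeneous component of q of degree j, and let j₀ be the smallest degree j for which q_j is not identically zero. If there exists ε > 0 such that q(v) ≤ 0 for all v ∈ ℝ² with ‖v‖ < ε, then q_{j₀}(v) ≤ 0 for all v ∈ ℝ². -/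
/-!
Along the ray through `x`, `φ (t • x) = ∑ⱼ tʲ φⱼ(x)` is a polynomial in `t` whose coefficients
below `j₀` vanish, so it equals `t ^ j₀ * Q t` with `Q 0 = φ_{j₀}(x)`. Nonpositivity of `φ` near
the origin gives `Q t ≤ 0` for small `t > 0`, and continuity of `Q` lets `t → 0⁺`.
-/

open Filter Topology
open scoped Polynomial

namespace MvPolynomial

variable {σ R : Type*} [CommSemiring R]

theorem IsHomogeneous.eval_smul {φ : MvPolynomial σ R} {n : ℕ} (hφ : φ.IsHomogeneous n)
    (t : R) (x : σ → R) : eval (t • x) φ = t ^ n * eval x φ := by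
  rw [eval_eq, eval_eq, Finset.mul_sum]
  refine Finset.sum_congr rfl fun d hd => ?_
  have hdeg : ∑ i ∈ d.support, d i = n := by
    simpa [Finsupp.degree, Finsupp.weight_apply, Finsupp.sum] using hφ (mem_support_iff.mp hd)
  simp only [Pi.smul_apply, smul_eq_mul, mul_pow, Finset.prod_mul_distrib,
    Finset.prod_pow_eq_pow_sum, hdeg]
  ring

noncomputable def radialPolynomial (φ : MvPolynomial σ R) (x : σ → R) : R[X] :=
  ∑ j ∈ Finset.range (φ.totalDegree + 1),
    Polynomial.C (eval x (homogeneousComponent j φ)) * Polynomial.X ^ j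

theorem eval_radialPolynomial (φ : MvPolynomial σ R) (x : σ → R) (t : R) :
    (radialPolynomial φ x).eval t = eval (t • x) φ := by
  conv_rhs => rw [← sum_homogeneousComponent φ]
  simp only [radialPolynomial, Polynomial.eval_finsetSum, map_sum, Polynomial.eval_mul,
    Polynomial.eval_C, Polynomial.eval_pow, Polynomial.eval_X,
    (homogeneousComponent_isHomogeneous _ φ).eval_smul, mul_comm]

theorem coeff_radialPolynomial (φ : MvPolynomial σ R) (x : σ → R) (j : ℕ) :
    (radialPolynomial φ x).coeff j = eval x (homogeneousComponent j φ) := by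
  simp only [radialPolynomial, Polynomial.finsetSum_coeff, Polynomial.coeff_C_mul_X_pow]
  rw [Finset.sum_ite_eq]
  split_ifs with hj
  · rfl
  · rw [homogeneousComponent_eq_zero _ _ (by simpa [Nat.lt_succ_iff] using hj), map_zero]

theorem eval_homogeneousComponent_nonpos_of_eventually_nonpos {φ : MvPolynomial σ ℝ}
    {x : σ → ℝ} {j₀ : ℕ} (hmin : ∀ j < j₀, homogeneousComponent j φ = 0)
    (hφ : ∀ᶠ t in 𝓝[>] (0 : ℝ), eval (t • x) φ ≤ 0) :
    eval x (homogeneousComponent j₀ φ) ≤ 0 := by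
  obtain ⟨Q, hQ⟩ : Polynomial.X ^ j₀ ∣ radialPolynomial φ x :=
    Polynomial.X_pow_dvd_iff.mpr fun d hd => by rw [coeff_radialPolynomial, hmin d hd, map_zero]
  have hQ_zero : Q.eval 0 = eval x (homogeneousComponent j₀ φ) := by
    rw [← Polynomial.coeff_zero_eq_eval_zero, ← coeff_radialPolynomial, hQ,
      Polynomial.coeff_X_pow_mul', if_pos le_rfl, Nat.sub_self]
  have hQ_nonpos : ∀ᶠ t in 𝓝[>] (0 : ℝ), Q.eval t ≤ 0 := by
    filter_upwards [hφ, self_mem_nhdsWithin] with t ht (ht_pos : 0 < t)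
    rw [← eval_radialPolynomial, hQ, Polynomial.eval_mul, Polynomial.eval_pow,
      Polynomial.eval_X] at ht
    exact nonpos_of_mul_nonpos_right ht (pow_pos ht_pos j₀)
  rw [← hQ_zero]
  exact le_of_tendsto (Q.continuous.continuousWithinAt (s := Set.Ioi 0)) hQ_nonpos

end MvPolynomial

theorem stmt10_general (q : MvPolynomial (Fin 2) ℝ) (j₀ : ℕ)
    (hmin : ∀ j : ℕ, j < j₀ → MvPolynomial.homogeneousComponent j q = 0)
    (hle : ∃ ε : ℝ, ε > 0 ∧ ∀ v : ℝ × ℝ, ‖v‖ < ε →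
      MvPolynomial.eval ![v.1, v.2] q ≤ 0) :
    ∀ v : ℝ × ℝ, MvPolynomial.eval ![v.1, v.2] (MvPolynomial.homogeneousComponent j₀ q) ≤ 0 := by
  intro v
  obtain ⟨ε, hε, hq_nonpos⟩ := hle
  have h_smul : Tendsto (fun t : ℝ => t • v) (𝓝 0) (𝓝 0) := by
    simpa using (tendsto_id (x := 𝓝 (0 : ℝ))).smul_const v
  refine MvPolynomial.eval_homogeneousComponent_nonpos_of_eventually_nonpos hmin ?_
  filter_upwards [nhdsWithin_le_nhds (h_smul.eventually (Metric.ball_mem_nhds 0 hε))] with t ht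
  have h_coords : t • ![v.1, v.2] = ![(t • v).1, (t • v).2] := by
    ext i
    fin_cases i <;> simp
  rw [h_coords]
  exact hq_nonpos (t • v) (by simpa using ht)

/-- If a nonzero polynomial `q` in two real variables is nonpositive on a
neighborhood of the origin, then its lowest-degree nonvanishing homogeneous
component `q_{j₀}` is nonpositive on all of `ℝ²`. -/
theorem stmt10 (q : MvPolynomial (Fin 2) ℝ) (hq : q ≠ 0) (j₀ : ℕ)
    (hj₀ : MvPolynomial.homogeneousComponent j₀ q ≠ 0)
    (hmin : ∀ j : ℕ, j < j₀ → MvPolynomial.homogeneousComponent j q = 0)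
    (hle : ∃ ε : ℝ, ε > 0 ∧ ∀ v : ℝ × ℝ, ‖v‖ < ε →
      MvPolynomial.eval ![v.1, v.2] q ≤ 0) :
    ∀ v : ℝ × ℝ, MvPolynomial.eval ![v.1, v.2] (MvPolynomial.homogeneousComponent j₀ q) ≤ 0 :=
  stmt10_general q j₀ hmin hle
end

section
/- If p ∈ ℝ[x,y] is a homogeneous polynomial of degree k ≥ 1 and satisfies ⟨∇p(x,y), f₀(x,y)⟩ ≤ 0 for all (x,y) ∈ ℝ², then p is the zero polynomial. -/
/-! For `H = (x⁴ + y⁴) / (x² + y²)` one computes `(x² + y²)² ∇H = (a, b)`, so `f₀` is the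
rotated gradient of `H` and the level curves of `H` are closed orbits of `f₀`. A function that
does not increase along a closed orbit is constant on it, so `p` takes a constant value `c` on
the curve `2 (x⁴ + y⁴) = x² + y²`, which meets every ray from the origin. Homogeneity then gives
the polynomial identity `p² (x² + y²)ᵏ = c² 2ᵏ (x⁴ + y⁴)ᵏ`, and evaluating it at `(i, 1)`
forces `c = 0`. -/

open MvPolynomial Real

theorem MvPolynomial.IsHomogeneous.eval_smul_s18 {R σ : Type*} [CommSemiring R]
    {φ : MvPolynomial σ R} {n : ℕ} (hφ : φ.IsHomogeneous n) (r : R) (v : σ → R) :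
    eval (r • v) φ = r ^ n * eval v φ := by
  rw [eval_eq, eval_eq, Finset.mul_sum]
  refine Finset.sum_congr rfl fun d hd => ?_
  have hdeg : ∑ i ∈ d.support, d i = n := by
    simpa [Finsupp.weight, Finsupp.linearCombination, Finsupp.sum] using hφ (mem_support_iff.mp hd)
  simp_rw [Pi.smul_apply, smul_eq_mul, mul_pow, Finset.prod_mul_distrib,
    Finset.prod_pow_eq_pow_sum, hdeg]
  ring

theorem MvPolynomial.funext_fin_two {R : Type*} [CommRing R] [IsDomain R] [Infinite R]
    {p q : MvPolynomial (Fin 2) R} (h : ∀ x y, eval ![x, y] p = eval ![x, y] q) : p = q :=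
  funext fun v => by
    have hv : ![v 0, v 1] = v := by ext i; fin_cases i <;> rfl
    simpa [hv] using h (v 0) (v 1)

theorem differentiable_eval_pair (p : MvPolynomial (Fin 2) ℝ) :
    Differentiable ℝ (fun w : ℝ × ℝ => eval ![w.1, w.2] p) := fun w => by
  have : ∀ i, AnalyticAt ℝ (fun w : ℝ × ℝ => ![w.1, w.2] i) w := by
    intro i; fin_cases i
    exacts [analyticAt_fst, analyticAt_snd]
  simpa [coe_aeval_eq_eval] using ((AnalyticAt.aeval_mvPolynomial this p).differentiableAt)

theorem Function.Periodic.eq_of_antitone {α : Type*} [PartialOrder α] {f : ℝ → α} {c : ℝ}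
    (hf : Periodic f c) (hc : 0 < c) (hanti : Antitone f) (x : ℝ) : f x = f 0 := by
  obtain ⟨y, ⟨hy0, hyc⟩, hxy⟩ := hf.exists_mem_Ico₀ hc x
  rw [hxy]
  exact le_antisymm (hanti hy0) (hf.eq ▸ hanti hyc.le)

theorem f0_smul (r : ℝ) (v : ℝ × ℝ) : f0 (r • v) = r ^ 5 • f0 v := by
  ext <;> simp only [f0, a, b, Prod.smul_fst, Prod.smul_snd, smul_eq_mul] <;> ring

theorem f0_cos_sin (θ : ℝ) :
    f0 (cos θ, sin θ) = (2 * sin (2 * θ) * cos (2 * θ)) • (cos θ, sin θ)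
      + (2 - sin (2 * θ) ^ 2) • (-sin θ, cos θ) := by
  have hpyth := sin_sq_add_cos_sq θ
  ext <;> simp only [f0, a, b, sin_two_mul, cos_two_mul, Prod.fst_add, Prod.snd_add,
    Prod.smul_fst, Prod.smul_snd, smul_eq_mul]
  · linear_combination (-2 * sin θ ^ 3 - 6 * sin θ * cos θ ^ 2 - 2 * sin θ) * hpyth
  · linear_combination (2 * cos θ ^ 3 + 2 * cos θ - 2 * cos θ * sin θ ^ 2) * hpyth

theorem two_sub_sin_sq_pos (x : ℝ) : 0 < 2 - sin x ^ 2 := by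
  nlinarith [sin_sq_le_one x]

-- `orbit` parametrizes, by polar angle, the curve `2 (x⁴ + y⁴) = x² + y²`.
noncomputable def orbitScale (θ : ℝ) : ℝ := √(2 - sin (2 * θ) ^ 2)

noncomputable def orbit (θ : ℝ) : ℝ × ℝ := (orbitScale θ)⁻¹ • (cos θ, sin θ)

theorem orbitScale_pos (θ : ℝ) : 0 < orbitScale θ := sqrt_pos.mpr (two_sub_sin_sq_pos _)

theorem orbitScale_sq (θ : ℝ) : orbitScale θ ^ 2 = 2 - sin (2 * θ) ^ 2 :=
  sq_sqrt (two_sub_sin_sq_pos _).le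

theorem orbit_periodic : Function.Periodic orbit (2 * π) := fun θ => by
  simp only [orbit, orbitScale, mul_add, show 2 * (2 * π) = 2 * π + 2 * π by ring,
    ← add_assoc, sin_add_two_pi, cos_add_two_pi]

theorem hasDerivAt_orbitScale_inv (θ : ℝ) :
    HasDerivAt (fun t => (orbitScale t)⁻¹)
      (2 * sin (2 * θ) * cos (2 * θ) / orbitScale θ ^ 3) θ := by
  have h := (((((hasDerivAt_id θ).const_mul 2).sin).pow 2).const_sub 2).sqrt
    (two_sub_sin_sq_pos (2 * θ)).ne' |>.inv (orbitScale_pos θ).ne'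
  refine h.congr_deriv ?_
  simp only [orbitScale, id, Pi.pow_apply]
  field_simp
  ring

theorem hasDerivAt_orbit (θ : ℝ) :
    HasDerivAt orbit ((2 - sin (2 * θ) ^ 2) • f0 (orbit θ)) θ := by
  have h := (hasDerivAt_orbitScale_inv θ).smul ((hasDerivAt_cos θ).prodMk (hasDerivAt_sin θ))
  refine h.congr_deriv ?_
  have hS := (orbitScale_pos θ).ne'
  rw [orbit, f0_smul, f0_cos_sin, ← orbitScale_sq]
  ext <;> simp only [Prod.fst_add, Prod.snd_add, Prod.smul_fst, Prod.smul_snd, smul_eq_mul] <;>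
    field_simp <;> ring

theorem apply_orbit_eq_of_fderiv_nonpos {F : ℝ × ℝ → ℝ} (hF : Differentiable ℝ F)
    (hder : ∀ v, fderiv ℝ F v (f0 v) ≤ 0) (θ : ℝ) : F (orbit θ) = F (orbit 0) := by
  have hderiv : ∀ t, HasDerivAt (F ∘ orbit)
      ((2 - sin (2 * t) ^ 2) * fderiv ℝ F (orbit t) (f0 (orbit t))) t := fun t => by
    simpa using (hF (orbit t)).hasFDerivAt.comp_hasDerivAt t (hasDerivAt_orbit t)
  have hanti : Antitone (F ∘ orbit) :=
    antitone_of_deriv_nonpos (fun t => (hderiv t).differentiableAt) fun t =>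
      (hderiv t).deriv ▸ mul_nonpos_of_nonneg_of_nonpos (two_sub_sin_sq_pos _).le (hder _)
  exact (orbit_periodic.comp F).eq_of_antitone two_pi_pos hanti θ

theorem exists_smul_orbit (w : ℝ × ℝ) :
    ∃ r θ, w = r • orbit θ ∧ r ^ 2 * (w.1 ^ 2 + w.2 ^ 2) = 2 * (w.1 ^ 4 + w.2 ^ 4) := by
  set z : ℂ := ⟨w.1, w.2⟩
  have hx : w.1 = ‖z‖ * cos z.arg := (Complex.norm_mul_cos_arg z).symm
  have hy : w.2 = ‖z‖ * sin z.arg := (Complex.norm_mul_sin_arg z).symm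
  have hS := (orbitScale_pos z.arg).ne'
  refine ⟨‖z‖ * orbitScale z.arg, z.arg, ?_, ?_⟩
  · rw [orbit, smul_smul, mul_assoc, mul_inv_cancel₀ hS, mul_one]
    ext <;> simp [← hx, ← hy]
  · rw [hx, hy, mul_pow, orbitScale_sq, sin_two_mul]
    linear_combination (-‖z‖ ^ 4 * (2 * (sin z.arg ^ 2 + cos z.arg ^ 2)
      + 4 * sin z.arg ^ 2 * cos z.arg ^ 2)) * sin_sq_add_cos_sq z.arg

theorem eq_zero_of_eval_sq_mul_pow_eq {k : ℕ} (hk : k ≠ 0) (p : MvPolynomial (Fin 2) ℝ)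
    (c : ℝ)
    (h : ∀ x y, eval ![x, y] p ^ 2 * (x ^ 2 + y ^ 2) ^ k = c * (x ^ 4 + y ^ 4) ^ k) : c = 0 := by
  have hpoly : p ^ 2 * (X 0 ^ 2 + X 1 ^ 2) ^ k = C c * (X 0 ^ 4 + X 1 ^ 4) ^ k :=
    funext_fin_two fun x y => by simpa using h x y
  simpa [Complex.I_sq, zero_pow hk] using congrArg (aeval ![Complex.I, 1]) hpoly

/-- A homogeneous polynomial of degree `k ≥ 1` whose derivative along `f₀` is
nonpositive everywhere must be the zero polynomial. -/
theorem stmt18 (k : ℕ) (hk : 1 ≤ k) (p : MvPolynomial (Fin 2) ℝ)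
    (hp : p.IsHomogeneous k)
    (hder : ∀ v : ℝ × ℝ,
      fderiv ℝ (fun w : ℝ × ℝ => MvPolynomial.eval ![w.1, w.2] p) v (f0 v) ≤ 0) :
    p = 0 := by
  obtain ⟨c, hc⟩ : ∃ c, ∀ θ, eval ![(orbit θ).1, (orbit θ).2] p = c :=
    ⟨_, apply_orbit_eq_of_fderiv_nonpos (differentiable_eval_pair p) hder⟩
  have hF : ∀ x y, ∃ r, eval ![x, y] p = r ^ k * c ∧
      r ^ 2 * (x ^ 2 + y ^ 2) = 2 * (x ^ 4 + y ^ 4) := fun x y => by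
    obtain ⟨r, θ, hxy, hr⟩ := exists_smul_orbit (x, y)
    refine ⟨r, ?_, hr⟩
    rw [← hc θ, ← hp.eval_smul_s18]
    obtain ⟨rfl, rfl⟩ := Prod.ext_iff.mp hxy
    simp
  have hc0 : c = 0 := by
    suffices c ^ 2 * 2 ^ k = 0 by simpa using this
    refine eq_zero_of_eval_sq_mul_pow_eq (k := k) (by omega) p _ fun x y => ?_
    obtain ⟨r, hpxy, hr⟩ := hF x y
    calc eval ![x, y] p ^ 2 * (x ^ 2 + y ^ 2) ^ k = c ^ 2 * (r ^ 2 * (x ^ 2 + y ^ 2)) ^ k := by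
          rw [hpxy, mul_pow, mul_pow, ← pow_mul, ← pow_mul]; ring
      _ = c ^ 2 * 2 ^ k * (x ^ 4 + y ^ 4) ^ k := by rw [hr, mul_pow]; ring
  refine funext_fin_two fun x y => ?_
  obtain ⟨r, hpxy, -⟩ := hF x y
  simp [hpxy, hc0]
end

section
/- The function V(x,y) = log(1 + x²) + y² is a global Lyapunov function for the vector field g(x,y) = (−x + xy, −y): V(0,0) = 0, V(x,y) > 0 for all (x,y) ≠ (0,0), V is radially unbounded (V(x,y) → ∞ as ‖(x,y)‖ → ∞), and ⟨∇V(x,y), g(x,y)⟩ < 0 for all (x,y) ≠ (0,0). -/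
/-- The Lyapunov candidate `V(x,y) = log(1 + x²) + y²`. -/
noncomputable def V (p : ℝ × ℝ) : ℝ := Real.log (1 + p.1 ^ 2) + p.2 ^ 2

/-- The vector field `g(x,y) = (-x + xy, -y)`. -/
def g (p : ℝ × ℝ) : ℝ × ℝ := (-p.1 + p.1 * p.2, -p.2)

/-! Away from the origin, the derivative of `V` along `g` is
`-2 (x² (y² - y + 1) + y²) / (1 + x²)`, negative since `y² - y + 1 = (y - 1/2)² + 3/4 > 0`.
Radial unboundedness follows from `log (1 + ‖p‖²) ≤ V p` for the sup norm, using `log (1 + t) ≤ t`. -/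

open Real Filter

lemma fderiv_V_apply (p v : ℝ × ℝ) :
    fderiv ℝ V p v = 2 * p.1 * v.1 / (1 + p.1 ^ 2) + 2 * p.2 * v.2 := by
  have hfst := (hasFDerivAt_fst (𝕜 := ℝ) (p := p)).pow 2
  have hsnd := (hasFDerivAt_snd (𝕜 := ℝ) (p := p)).pow 2
  have hlog := (hfst.const_add 1).log (by positivity)
  have hV : HasFDerivAt V _ p := hlog.add hsnd
  rw [hV.fderiv]
  simp only [Nat.add_one_sub_one, pow_one, nsmul_eq_mul, Nat.cast_ofNat, add_apply, smul_apply,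
    ContinuousLinearMap.coe_fst', smul_eq_mul, ContinuousLinearMap.coe_snd']
  ring

lemma fderiv_V_apply_g (p : ℝ × ℝ) :
    fderiv ℝ V p (g p) = -2 * (p.1 ^ 2 * (p.2 ^ 2 - p.2 + 1) + p.2 ^ 2) / (1 + p.1 ^ 2) := by
  rw [fderiv_V_apply, g]
  field_simp
  ring

lemma log_one_add_norm_sq_le_V (p : ℝ × ℝ) : log (1 + ‖p‖ ^ 2) ≤ V p := by
  have hx : 0 ≤ log (1 + p.1 ^ 2) := log_nonneg (by nlinarith)
  have hy : log (1 + p.2 ^ 2) ≤ p.2 ^ 2 := by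
    linarith [log_le_sub_one_of_pos (by positivity : (0:ℝ) < 1 + p.2 ^ 2)]
  rcases le_total ‖p.1‖ ‖p.2‖ with h | h
  · rw [Prod.norm_def, max_eq_right h, Real.norm_eq_abs, sq_abs, V]
    linarith
  · rw [Prod.norm_def, max_eq_left h, Real.norm_eq_abs, sq_abs, V]
    linarith [sq_nonneg p.2]

lemma tendsto_V_cocompact : Tendsto V (cocompact (ℝ × ℝ)) atTop :=
  tendsto_atTop_mono log_one_add_norm_sq_le_V <| tendsto_log_atTop.comp <|
    tendsto_atTop_add_const_left _ 1 <|
      (tendsto_pow_atTop two_ne_zero).comp tendsto_norm_cocompact_atTop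

lemma V_pos {p : ℝ × ℝ} (hp : p ≠ 0) : 0 < V p := by
  rcases eq_or_ne p.1 0 with hx | hx
  · have hy : p.2 ≠ 0 := fun hy => hp (Prod.ext hx hy)
    rw [V, hx]
    positivity
  · have : 0 < log (1 + p.1 ^ 2) := log_pos (by simp [hx, sq_pos_of_ne_zero])
    rw [V]
    positivity

lemma fderiv_V_apply_g_neg {p : ℝ × ℝ} (hp : p ≠ 0) : fderiv ℝ V p (g p) < 0 := by
  have hq : 0 < p.2 ^ 2 - p.2 + 1 := by nlinarith [sq_nonneg (p.2 - 1 / 2)]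
  have hnum : 0 < p.1 ^ 2 * (p.2 ^ 2 - p.2 + 1) + p.2 ^ 2 := by
    rcases eq_or_ne p.1 0 with hx | hx
    · have hy : p.2 ≠ 0 := fun hy => hp (Prod.ext hx hy)
      rw [hx]
      positivity
    · positivity
  rw [fderiv_V_apply_g]
  exact div_neg_of_neg_of_pos (by linarith) (by positivity)

/-- `V` is a global Lyapunov function for `g`: it vanishes at the origin, is
positive away from the origin, is radially unbounded, and its derivative along
`g` is negative away from the origin. -/
theorem stmt19 :
    V 0 = 0 ∧
    (∀ p : ℝ × ℝ, p ≠ 0 → V p > 0) ∧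
    Filter.Tendsto V (Filter.cocompact (ℝ × ℝ)) Filter.atTop ∧
    (∀ p : ℝ × ℝ, p ≠ 0 → fderiv ℝ V p (g p) < 0) :=
  ⟨by simp [V], fun _ => V_pos, tendsto_V_cocompact, fun _ => fderiv_V_apply_g_neg⟩
end
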